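/- Let c₀>0, α∈(0,1], β=√(1−α²), and let f:ℝ→ℂ be a solution of the profile ODE with energy E₀. Let z_∞ = lim_{s→+∞}|f(s)|² and let I := ∫₀^∞ e^{−(α+iβ)σ²/4}dσ (a convergent complex integral, equal to √π/√(α+iβ) for the square root with positive real part). Then |z_∞ − |f(0) + f'(0)·I|²| ≤ (√(2E₀)·c₀·π/α)·|f(0) + f'(0)·I| + (√(2E₀)·c₀·π/(2α))². -/

import Mathlib

open Real Filter MeasureTheory

/-- The profile ODE `f'' + (s/2)(α+iβ) f' + (c₀²/4) e^{-αs²/2} f = 0`, with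
`β = √(1-α²)`, encoded for a pair `(f, f')`. -/
def ProfileODE (c₀ α : ℝ) (f f' : ℝ → ℂ) : Prop :=
  ∀ s : ℝ,
    HasDerivAt f (f' s) s ∧
    HasDerivAt f'
      (-(((s : ℂ) / 2) * ((α : ℂ) + (Real.sqrt (1 - α ^ 2) : ℂ) * Complex.I) * f' s
        + ((c₀ ^ 2 / 4 : ℝ) : ℂ) * ((Real.exp (-α * s ^ 2 / 2) : ℝ) : ℂ) * f s)) s

/-!
With `ν = α + iβ`, the integrating factor `e^{νs²/4}` turns the equation into
`(e^{νs²/4} f')' = -(c₀²/4) e^{(ν - 2α)s²/4} f`. The energy gives `(c₀/2)|f| ≤ √(2E₀)`, so the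
right side is at most `(c₀/2)√(2E₀) e^{-αs²/4}`, and therefore
`f'(s) = e^{-νs²/4} f'(0) + r(s)` with `|r(s)| ≤ (c₀/2)√(2E₀)√(π/α) e^{-αs²/4}` for `s ≥ 0`.
Integrating over `(0, ∞)`, `f(∞) = f(0) + f'(0) I + R` with `|R| ≤ √(2E₀) c₀ π / (2α)`, and the
estimate follows from `||a + R|² - |a|²| ≤ 2|R||a| + |R|²`.
-/

open Set
open scoped Complex

theorem integral_exp_neg_mul_sq_div_four_Ioi (a : ℝ) :
    ∫ x in Ioi (0 : ℝ), rexp (-a * x ^ 2 / 4) = √(π / a) := by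
  have hsq : √(4 : ℝ) = 2 := by
    rw [show (4 : ℝ) = 2 ^ 2 by norm_num, Real.sqrt_sq zero_le_two]
  simp_rw [show ∀ x : ℝ, -a * x ^ 2 / 4 = -(a / 4) * x ^ 2 from fun x ↦ by ring]
  rw [integral_gaussian_Ioi, div_div_eq_mul_div, mul_comm π, mul_div_assoc,
    Real.sqrt_mul (by norm_num), hsq]
  ring

section GaussianBounds

variable {E : Type*} [NormedAddCommGroup E] {a C : ℝ} {g : ℝ → E}

theorem integrableOn_Ioi_of_norm_le_exp_neg_mul_sq (ha : 0 < a)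
    (hg : AEStronglyMeasurable g (volume.restrict (Ioi 0)))
    (hbound : ∀ x ∈ Ioi (0 : ℝ), ‖g x‖ ≤ C * rexp (-a * x ^ 2 / 4)) :
    IntegrableOn g (Ioi 0) := by
  refine Integrable.mono' ?_ hg ((ae_restrict_iff' measurableSet_Ioi).2 (.of_forall hbound))
  simp_rw [show ∀ x : ℝ, -a * x ^ 2 / 4 = -(a / 4) * x ^ 2 from fun x ↦ by ring]
  exact ((integrable_exp_neg_mul_sq (by positivity)).const_mul C).integrableOn

theorem norm_setIntegral_le_of_norm_le_exp_neg_mul_sq [NormedSpace ℝ E] {s : Set ℝ}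
    (hs : MeasurableSet s) (hs0 : s ⊆ Ioi 0) (ha : 0 < a) (hC : 0 ≤ C)
    (hbound : ∀ x ∈ s, ‖g x‖ ≤ C * rexp (-a * x ^ 2 / 4)) :
    ‖∫ x in s, g x‖ ≤ C * √(π / a) := by
  have hint : IntegrableOn (fun x ↦ C * rexp (-a * x ^ 2 / 4)) (Ioi 0) :=
    integrableOn_Ioi_of_norm_le_exp_neg_mul_sq ha (by fun_prop) fun x _ ↦ by
      rw [Real.norm_of_nonneg (by positivity)]
  calc ‖∫ x in s, g x‖ ≤ ∫ x in s, C * rexp (-a * x ^ 2 / 4) :=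
        norm_integral_le_of_norm_le (hint.mono_set hs0)
          ((ae_restrict_iff' hs).2 (.of_forall hbound))
    _ ≤ ∫ x in Ioi 0, C * rexp (-a * x ^ 2 / 4) :=
        setIntegral_mono_set hint (.of_forall fun _ ↦ by positivity) hs0.eventuallyLE
    _ = C * √(π / a) := by rw [integral_const_mul, integral_exp_neg_mul_sq_div_four_Ioi a]

end GaussianBounds

theorem tendsto_add_integral_Ioi_of_hasDerivAt {E : Type*} [NormedAddCommGroup E]
    [NormedSpace ℝ E] [CompleteSpace E] {f f' : ℝ → E} {a : ℝ}
    (hderiv : ∀ x ∈ Ici a, HasDerivAt f (f' x) x) (hint : IntegrableOn f' (Ioi a)) :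
    Tendsto f atTop (nhds (f a + ∫ x in Ioi a, f' x)) := by
  have hlim := tendsto_limUnder_of_hasDerivAt_of_integrableOn_Ioi
    (fun x hx ↦ hderiv x (Ioi_subset_Ici_self hx)) hint
  rwa [integral_Ioi_of_hasDerivAt_of_tendsto' hderiv hint hlim, add_sub_cancel]

theorem abs_norm_add_sq_sub_norm_sq_le {E : Type*} [SeminormedAddCommGroup E] (x y : E) :
    |‖x + y‖ ^ 2 - ‖x‖ ^ 2| ≤ 2 * ‖y‖ * ‖x‖ + ‖y‖ ^ 2 := by
  have h₁ : |‖x + y‖ - ‖x‖| ≤ ‖y‖ := by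
    simpa using abs_norm_sub_norm_le (x + y) x
  have h₂ : ‖x + y‖ + ‖x‖ ≤ 2 * ‖x‖ + ‖y‖ := by linarith [norm_add_le x y]
  rw [sq_sub_sq, abs_mul, abs_of_nonneg (by positivity : 0 ≤ ‖x + y‖ + ‖x‖)]
  calc (‖x + y‖ + ‖x‖) * |‖x + y‖ - ‖x‖| ≤ (2 * ‖x‖ + ‖y‖) * ‖y‖ := by gcongr
    _ = _ := by ring

section IntegratingFactor

variable {ν : ℂ} {u p : ℝ → ℂ} {C : ℝ}

theorem norm_cexp_mul_sq_div_four (ν : ℂ) (t : ℝ) :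
    ‖cexp (ν * t ^ 2 / 4)‖ = rexp (ν.re * t ^ 2 / 4) := by
  rw [Complex.norm_exp, ← Complex.ofReal_pow, Complex.div_ofNat_re, Complex.re_mul_ofReal]

theorem hasDerivAt_cexp_mul_sq_div_four (ν : ℂ) (t : ℝ) :
    HasDerivAt (fun t : ℝ ↦ cexp (ν * t ^ 2 / 4)) (cexp (ν * t ^ 2 / 4) * (t / 2 * ν)) t := by
  have h : HasDerivAt (fun z : ℂ ↦ ν * z ^ 2 / 4) (t / 2 * ν) t :=
    (((hasDerivAt_pow 2 (t : ℂ)).const_mul ν).div_const 4).congr_deriv (by ring)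
  exact h.cexp.comp_ofReal

theorem integrableOn_Ioi_cexp_neg_mul_sq_div_four_mul (hre : 0 < ν.re) (z : ℂ) :
    IntegrableOn (fun t : ℝ ↦ cexp (-ν * t ^ 2 / 4) * z) (Ioi 0) :=
  integrableOn_Ioi_of_norm_le_exp_neg_mul_sq hre (by fun_prop) fun t _ ↦ by
    rw [norm_mul, norm_cexp_mul_sq_div_four, Complex.neg_re, mul_comm]

variable (hu : ∀ t : ℝ, HasDerivAt u (-((t : ℂ) / 2 * ν * u t + p t)) t) (hp : Continuous p)
include hu hp

theorem sub_cexp_mul_eq_neg_cexp_mul_integral (t : ℝ) :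
    u t - cexp (-ν * t ^ 2 / 4) * u 0 =
      -(cexp (-ν * t ^ 2 / 4) * ∫ s in (0 : ℝ)..t, cexp (ν * s ^ 2 / 4) * p s) := by
  have hderiv : ∀ s : ℝ, HasDerivAt (fun s : ℝ ↦ cexp (ν * s ^ 2 / 4) * u s)
      (-(cexp (ν * s ^ 2 / 4) * p s)) s := fun s ↦
    ((hasDerivAt_cexp_mul_sq_div_four ν s).mul (hu s)).congr_deriv (by ring)
  have hftc := intervalIntegral.integral_eq_sub_of_hasDerivAt (fun s _ ↦ hderiv s)
    (Continuous.intervalIntegrable (by fun_prop) 0 t)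
  have hinv : cexp (-ν * t ^ 2 / 4) * cexp (ν * t ^ 2 / 4) = 1 := by
    rw [← Complex.exp_add, neg_mul, neg_div, neg_add_cancel, Complex.exp_zero]
  rw [intervalIntegral.integral_neg, eq_sub_iff_add_eq] at hftc
  simp only [Complex.ofReal_zero, zero_pow two_ne_zero, mul_zero, zero_div,
    Complex.exp_zero, one_mul] at hftc
  linear_combination (-cexp (-ν * t ^ 2 / 4)) * hftc - u t * hinv

variable (hre : 0 < ν.re) (hC : 0 ≤ C)
  (hbound : ∀ s ∈ Ioi (0 : ℝ), ‖cexp (ν * s ^ 2 / 4) * p s‖ ≤ C * rexp (-ν.re * s ^ 2 / 4))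
include hre hC hbound

theorem norm_sub_cexp_mul_le {t : ℝ} (ht : 0 ≤ t) :
    ‖u t - cexp (-ν * t ^ 2 / 4) * u 0‖ ≤ C * √(π / ν.re) * rexp (-ν.re * t ^ 2 / 4) := by
  rw [sub_cexp_mul_eq_neg_cexp_mul_integral hu hp, norm_neg, norm_mul,
    norm_cexp_mul_sq_div_four, Complex.neg_re, mul_comm]
  gcongr
  rw [intervalIntegral.integral_of_le ht]
  exact norm_setIntegral_le_of_norm_le_exp_neg_mul_sq measurableSet_Ioc Ioc_subset_Ioi_self hre hC
    fun s hs ↦ hbound s hs.1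

theorem integrableOn_Ioi_sub_cexp_mul :
    IntegrableOn (fun t : ℝ ↦ u t - cexp (-ν * t ^ 2 / 4) * u 0) (Ioi 0) := by
  have hcont : Continuous u := continuous_iff_continuousAt.2 fun t ↦ (hu t).continuousAt
  exact integrableOn_Ioi_of_norm_le_exp_neg_mul_sq hre (by fun_prop)
    fun t ht ↦ norm_sub_cexp_mul_le hu hp hre hC hbound (le_of_lt ht)

theorem integrableOn_Ioi_of_hasDerivAt_neg_mul_add : IntegrableOn u (Ioi 0) :=
  ((integrableOn_Ioi_sub_cexp_mul hu hp hre hC hbound).add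
    (integrableOn_Ioi_cexp_neg_mul_sq_div_four_mul hre (u 0))).congr_fun
    (fun _ _ ↦ sub_add_cancel _ _) measurableSet_Ioi

theorem norm_integral_Ioi_sub_integral_cexp_mul_le :
    ‖(∫ t in Ioi (0 : ℝ), u t) - (∫ t in Ioi (0 : ℝ), cexp (-ν * t ^ 2 / 4)) * u 0‖
      ≤ C * (π / ν.re) := by
  rw [← integral_mul_const, ← integral_sub
    (integrableOn_Ioi_of_hasDerivAt_neg_mul_add hu hp hre hC hbound)
    (integrableOn_Ioi_cexp_neg_mul_sq_div_four_mul hre (u 0))]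
  calc _ ≤ C * √(π / ν.re) * √(π / ν.re) :=
        norm_setIntegral_le_of_norm_le_exp_neg_mul_sq measurableSet_Ioi subset_rfl hre
          (by positivity) fun t ht ↦ norm_sub_cexp_mul_le hu hp hre hC hbound (le_of_lt ht)
    _ = C * (π / ν.re) := by rw [mul_assoc, Real.mul_self_sqrt (by positivity)]

end IntegratingFactor

namespace ProfileODE

variable {c₀ α K : ℝ} {f f' : ℝ → ℂ}

theorem norm_cexp_mul_forcing_le {ν : ℂ} (hνre : ν.re = α) (hc₀ : 0 ≤ c₀)
    {z : ℂ} (hz : c₀ / 2 * ‖z‖ ≤ K) (s : ℝ) :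
    ‖cexp (ν * s ^ 2 / 4) * (((c₀ ^ 2 / 4 : ℝ) : ℂ) * ((rexp (-α * s ^ 2 / 2) : ℝ) : ℂ) * z)‖
      ≤ c₀ / 2 * K * rexp (-ν.re * s ^ 2 / 4) := by
  rw [norm_mul, norm_mul, norm_mul, norm_cexp_mul_sq_div_four, Complex.norm_real,
    Complex.norm_real, Real.norm_of_nonneg (by positivity), Real.norm_of_nonneg (by positivity),
    hνre]
  have hexp : rexp (α * s ^ 2 / 4) * rexp (-α * s ^ 2 / 2) = rexp (-α * s ^ 2 / 4) := by
    rw [← Real.exp_add]; ring_nf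
  calc rexp (α * s ^ 2 / 4) * (c₀ ^ 2 / 4 * rexp (-α * s ^ 2 / 2) * ‖z‖)
      = c₀ / 2 * (c₀ / 2 * ‖z‖) * (rexp (α * s ^ 2 / 4) * rexp (-α * s ^ 2 / 2)) := by ring
    _ ≤ c₀ / 2 * K * rexp (-α * s ^ 2 / 4) := by rw [hexp]; gcongr

theorem continuous (h : ProfileODE c₀ α f f') : Continuous f :=
  continuous_iff_continuousAt.2 fun s ↦ (h s).1.continuousAt

variable (h : ProfileODE c₀ α f f') (hα : 0 < α) (hc₀ : 0 ≤ c₀)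
  (hK : ∀ s, c₀ / 2 * ‖f s‖ ≤ K)
include h hα hc₀ hK

theorem integrableOn_Ioi_deriv : IntegrableOn f' (Ioi 0) := by
  have := h.continuous
  have hK0 : 0 ≤ K := (by positivity : 0 ≤ c₀ / 2 * ‖f 0‖).trans (hK 0)
  exact integrableOn_Ioi_of_hasDerivAt_neg_mul_add (fun t ↦ (h t).2) (by fun_prop)
    (by simpa using hα) (by positivity) fun s _ ↦ norm_cexp_mul_forcing_le (by simp) hc₀ (hK s) s

theorem norm_integral_Ioi_deriv_sub_le :
    ‖(∫ t in Ioi (0 : ℝ), f' t) - (∫ t in Ioi (0 : ℝ),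
        cexp (-((α : ℂ) + (√(1 - α ^ 2) : ℂ) * Complex.I) * t ^ 2 / 4)) * f' 0‖
      ≤ c₀ / 2 * K * (π / α) := by
  have := h.continuous
  have hK0 : 0 ≤ K := (by positivity : 0 ≤ c₀ / 2 * ‖f 0‖).trans (hK 0)
  simpa using norm_integral_Ioi_sub_integral_cexp_mul_le (fun t ↦ (h t).2) (by fun_prop)
    (by simpa using hα) (by positivity) fun s _ ↦ norm_cexp_mul_forcing_le (by simp) hc₀ (hK s) s

end ProfileODE

/-- For `α ∈ (0,1]`, estimate of `z_∞` in terms of the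
initial data: with `I = ∫₀^∞ e^{-(α+iβ)σ²/4} dσ`,
`|z_∞ − |f(0)+f'(0)I|²| ≤ (√(2E₀)c₀π/α)|f(0)+f'(0)I| + (√(2E₀)c₀π/(2α))²`. -/
theorem profileODE_zinf_estimate (c₀ α : ℝ) (hc₀ : 0 < c₀)
    (hα : α ∈ Set.Ioc (0 : ℝ) 1)
    (f f' : ℝ → ℂ) (h : ProfileODE c₀ α f f')
    (E₀ : ℝ)
    (hE : ∀ s : ℝ,
      (1 / 2) * (Real.exp (α * s ^ 2 / 2) * ‖f' s‖ ^ 2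
        + (c₀ ^ 2 / 4) * ‖f s‖ ^ 2) = E₀)
    (zinf : ℝ)
    (hz : Tendsto (fun s : ℝ => ‖f s‖ ^ 2) atTop (nhds zinf))
    (Iint : ℂ)
    (hI : Iint = ∫ σ in Set.Ioi (0 : ℝ),
      Complex.exp (-((α : ℂ) + (Real.sqrt (1 - α ^ 2) : ℂ) * Complex.I)
        * (σ : ℂ) ^ 2 / 4)) :
    |zinf - ‖f 0 + f' 0 * Iint‖ ^ 2|
      ≤ (Real.sqrt (2 * E₀) * c₀ * Real.pi / α)
          * ‖f 0 + f' 0 * Iint‖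
        + (Real.sqrt (2 * E₀) * c₀ * Real.pi / (2 * α)) ^ 2 := by
  set K := √(2 * E₀)
  have hfK (s : ℝ) : c₀ / 2 * ‖f s‖ ≤ K := by
    refine Real.le_sqrt_of_sq_le ?_
    have := hE s
    have : 0 ≤ rexp (α * s ^ 2 / 2) * ‖f' s‖ ^ 2 := by positivity
    linarith
  have hlim := tendsto_add_integral_Ioi_of_hasDerivAt (fun t _ ↦ (h t).1)
    (h.integrableOn_Ioi_deriv hα.1 hc₀.le hfK)
  have hR := h.norm_integral_Ioi_deriv_sub_le hα.1 hc₀.le hfK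
  rw [← hI] at hR
  set A := f 0 + f' 0 * Iint
  set R := (∫ t in Ioi (0 : ℝ), f' t) - Iint * f' 0
  have hzinf : zinf = ‖A + R‖ ^ 2 := by
    rw [tendsto_nhds_unique hz (hlim.norm.pow 2)]
    congr 2
    simp only [A, R]
    ring
  calc |zinf - ‖A‖ ^ 2| ≤ 2 * ‖R‖ * ‖A‖ + ‖R‖ ^ 2 := hzinf ▸ abs_norm_add_sq_sub_norm_sq_le A R
    _ ≤ 2 * (c₀ / 2 * K * (π / α)) * ‖A‖ + (c₀ / 2 * K * (π / α)) ^ 2 := by gcongr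
    _ = _ := by ring
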